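/- Let a, S, Z, q be rational numbers with Z ≠ 0, q ≠ 0, and q² = −Z²/6 − S/(6Z). Suppose X', Y' are rational numbers with Y' ≠ 0 satisfying Y'² = X'³ + (aZ/9 + (a/(9Z²))·S)·X'. Define U = 2q·X'/Y' and t = −q + U²·X'/(2q). Then t² = (a/(6Z))·U⁴ + q², and consequently (−Z+t)³ + (−Z−t)³ + Z³ + a·U⁴ = S. -/

import Mathlib

/-!
The curve `Y² = X³ + (aZ/9 + aS/(9Z²)) X` is `Y² = X³ - 4Aq²X` with `A = a/(6Z)`, the standard cubic
model of the quartic `t² = A U⁴ + q²`, and `U = 2qX/Y`, `t = -q + U²X/(2q)` is the usual map from the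
cubic to the quartic. Since `(-Z+t)³ + (-Z-t)³ + Z³ = -Z³ - 6Zt²`, a point of the quartic gives
`-Z³ - 6Z q² = S`, which is the defining relation of `q`.
-/

section

variable {K : Type*} [Field K]

theorem quartic_point_of_cubic_point {A q X Y : K} (hq : q ≠ 0) (hY : Y ≠ 0)
    (h : Y ^ 2 = X ^ 3 - 4 * A * q ^ 2 * X) :
    (-q + (2 * q * X / Y) ^ 2 * X / (2 * q)) ^ 2 = A * (2 * q * X / Y) ^ 4 + q ^ 2 := by
  field_simp
  linear_combination (-4 * X ^ 3) * h

variable [CharZero K]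

theorem cubic_coeff_eq {a S Z q : K} (hZ : Z ≠ 0) (hq2 : q ^ 2 = -Z ^ 2 / 6 - S / (6 * Z)) :
    a * Z / 9 + a / (9 * Z ^ 2) * S = -(4 * (a / (6 * Z)) * q ^ 2) := by
  rw [hq2]
  field_simp
  ring

theorem sum_cubes_eq_of_quartic {a S Z q t U : K} (hZ : Z ≠ 0)
    (hq2 : q ^ 2 = -Z ^ 2 / 6 - S / (6 * Z)) (ht : t ^ 2 = a / (6 * Z) * U ^ 4 + q ^ 2) :
    (-Z + t) ^ 3 + (-Z - t) ^ 3 + Z ^ 3 + a * U ^ 4 = S := by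
  calc (-Z + t) ^ 3 + (-Z - t) ^ 3 + Z ^ 3 + a * U ^ 4 = -Z ^ 3 - 6 * Z * t ^ 2 + a * U ^ 4 := by
        ring
    _ = S := by
        rw [ht, hq2]
        field_simp
        ring

end

theorem elliptic_point_gives_solution (a S Z q X' Y' : ℚ) (hZ : Z ≠ 0) (hq : q ≠ 0)
    (hq2 : q ^ 2 = -Z ^ 2 / 6 - S / (6 * Z)) (hY : Y' ≠ 0)
    (hcurve : Y' ^ 2 = X' ^ 3 + (a * Z / 9 + (a / (9 * Z ^ 2)) * S) * X') :
    let U := 2 * q * X' / Y'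
    let t := -q + U ^ 2 * X' / (2 * q)
    t ^ 2 = (a / (6 * Z)) * U ^ 4 + q ^ 2 ∧
      (-Z + t) ^ 3 + (-Z - t) ^ 3 + Z ^ 3 + a * U ^ 4 = S := by
  intro U t
  have hcubic : Y' ^ 2 = X' ^ 3 - 4 * (a / (6 * Z)) * q ^ 2 * X' := by
    rw [hcurve, cubic_coeff_eq hZ hq2]
    ring
  have hquartic : t ^ 2 = (a / (6 * Z)) * U ^ 4 + q ^ 2 :=
    quartic_point_of_cubic_point hq hY hcubic
  exact ⟨hquartic, sum_cubes_eq_of_quartic hZ hq2 hquartic⟩
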